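/- Let f ∈ L²(ℝ), ψ ∈ L¹∩L²(ℝ), and let χ ∈ L¹∩L²(ℝ) be a pointwise nonnegative real-valued function. Then for every δ ∈ ℝ, ‖ |f⋆ψ| ⋆ χ ‖₂ ≥ ‖ f⋆ψ⋆(χ·e^{2πiδ·}) ‖₂, where (χ·e^{2πiδ·})(t) = χ(t)e^{2πiδt}. -/

import Mathlib

/-!
Since `χ ≥ 0`, the modulated kernel `χ·e^{2πiδ·}` has modulus `χ`, so pointwise
`|g ⋆ (χ·e^{2πiδ·})| ≤ |g| ⋆ |χ·e^{2πiδ·}| = |g| ⋆ χ` for `g = f ⋆ ψ`; squaring and integrating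
gives the claim. The only analytic input is that the right-hand side is integrable, i.e. that
`|g| ⋆ χ ∈ L²`: by Young's inequality `‖u ⋆ k‖₂ ≤ ‖k‖₁ ‖u‖₂` (itself Cauchy–Schwarz against the
weight `k`), applied first to `g = f ⋆ ψ` and then to `|g| ⋆ χ`.
-/

open MeasureTheory Real Complex FourierTransform

/-- Convolution of two functions on `ℝ`. -/
noncomputable def conv (f g : ℝ → ℂ) : ℝ → ℂ := fun t => ∫ s, f s * g (t - s)

open scoped ENNReal

theorem ENNReal.lintegral_mul_sq_le {α : Type*} [MeasurableSpace α] {μ : Measure α}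
    {u k : α → ℝ≥0∞} (hu : AEMeasurable u μ) (hk : AEMeasurable k μ) :
    (∫⁻ a, u a * k a ∂μ) ^ 2 ≤ (∫⁻ a, u a ^ 2 * k a ∂μ) * ∫⁻ a, k a ∂μ := by
  have hsqrt : ∀ a, (u a ^ 2 * k a) ^ (2⁻¹ : ℝ) * k a ^ (2⁻¹ : ℝ) = u a * k a := fun a => by
    rw [← ENNReal.mul_rpow_of_nonneg _ _ (by norm_num), mul_assoc, ← sq, ← mul_pow]
    exact_mod_cast ENNReal.pow_rpow_inv_natCast two_ne_zero _
  have := ENNReal.lintegral_mul_norm_pow_le ((hu.pow_const 2).mul hk) hk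
    (p := 2⁻¹) (q := 2⁻¹) (by norm_num) (by norm_num) (by norm_num)
  simp only [Pi.mul_apply, hsqrt] at this
  calc (∫⁻ a, u a * k a ∂μ) ^ 2
      ≤ ((∫⁻ a, u a ^ 2 * k a ∂μ) ^ (2⁻¹ : ℝ) * (∫⁻ a, k a ∂μ) ^ (2⁻¹ : ℝ)) ^ 2 :=
        pow_le_pow_left' this 2
    _ = (∫⁻ a, u a ^ 2 * k a ∂μ) * ∫⁻ a, k a ∂μ := by
        rw [← ENNReal.mul_rpow_of_nonneg _ _ (by norm_num)]
        exact_mod_cast ENNReal.rpow_inv_natCast_pow two_ne_zero _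

namespace MeasureTheory

section Young

variable {G : Type*} [MeasurableSpace G] [AddGroup G] [MeasurableAdd₂ G] [MeasurableNeg G]
  {μ : Measure G} [μ.IsAddLeftInvariant] [μ.IsNegInvariant]

theorem lintegral_neg_add_eq_self (k : G → ℝ≥0∞) (x : G) :
    ∫⁻ y, k (-y + x) ∂μ = ∫⁻ y, k y ∂μ := by
  rw [← lintegral_add_left_eq_self _ x, ← lintegral_neg_eq_self k]
  simp

theorem lintegral_lconvolution_sq_le [SFinite μ] {u k : G → ℝ≥0∞} (hu : AEMeasurable u μ)
    (hk : AEMeasurable k μ) :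
    ∫⁻ x, (u ⋆ₗ[μ] k) x ^ 2 ∂μ ≤ (∫⁻ x, k x ∂μ) ^ 2 * ∫⁻ x, u x ^ 2 ∂μ := by
  have hpoint : ∀ x, (u ⋆ₗ[μ] k) x ^ 2 ≤ ((u · ^ 2) ⋆ₗ[μ] k) x * ∫⁻ y, k y ∂μ := fun x => by
    rw [lconvolution_def, lconvolution_def, ← lintegral_neg_add_eq_self k x]
    exact ENNReal.lintegral_mul_sq_le hu (by fun_prop)
  calc ∫⁻ x, (u ⋆ₗ[μ] k) x ^ 2 ∂μ
      ≤ ∫⁻ x, ((u · ^ 2) ⋆ₗ[μ] k) x * ∫⁻ y, k y ∂μ ∂μ := lintegral_mono hpoint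
    _ = (∫⁻ x, ∫⁻ y, u y ^ 2 * k (-y + x) ∂μ ∂μ) * ∫⁻ y, k y ∂μ := by
        rw [lintegral_mul_const'' _ (aemeasurable_lconvolution (hu.pow_const 2) hk)]
        rfl
    _ = (∫⁻ y, u y ^ 2 * ∫⁻ x, k (-y + x) ∂μ ∂μ) * ∫⁻ y, k y ∂μ := by
        rw [lintegral_lintegral_swap (by fun_prop)]
        congr 1
        exact lintegral_congr fun y => lintegral_const_mul'' _ <|
          hk.comp_quasiMeasurePreserving (measurePreserving_add_left μ (-y)).quasiMeasurePreserving
    _ = (∫⁻ x, k x ∂μ) ^ 2 * ∫⁻ x, u x ^ 2 ∂μ := by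
        simp_rw [lintegral_add_left_eq_self (fun x => k x),
          lintegral_mul_const'' _ (hu.pow_const 2)]
        ring

end Young

end MeasureTheory

theorem aestronglyMeasurable_conv {f g : ℝ → ℂ} (hf : AEStronglyMeasurable f)
    (hg : AEStronglyMeasurable g) : AEStronglyMeasurable (conv f g) := by
  have := (hf.convolution_integrand (ContinuousLinearMap.mul ℝ ℂ) hg).integral_prod_right'
  simp only [ContinuousLinearMap.mul_apply'] at this
  exact this

theorem enorm_conv_le_lconvolution (f g : ℝ → ℂ) (t : ℝ) :
    ‖conv f g t‖ₑ ≤ ((‖f ·‖ₑ) ⋆ₗ (‖g ·‖ₑ)) t := by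
  simpa only [conv, lconvolution_def, neg_add_eq_sub, enorm_mul] using
    enorm_integral_le_lintegral_enorm (fun s => f s * g (t - s))

theorem eLpNorm_two_lt_top_iff {α E : Type*} [MeasurableSpace α] [NormedAddCommGroup E]
    {μ : Measure α} {f : α → E} : eLpNorm f 2 μ < ∞ ↔ ∫⁻ a, ‖f a‖ₑ ^ 2 ∂μ < ∞ := by
  simpa using eLpNorm_lt_top_iff_lintegral_rpow_enorm_lt_top (f := f) (μ := μ)
    two_ne_zero ENNReal.ofNat_ne_top

theorem MeasureTheory.MemLp.conv_of_integrable {f g : ℝ → ℂ} (hf : MemLp f 2)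
    (hg : Integrable g) : MemLp (conv f g) 2 := by
  refine ⟨aestronglyMeasurable_conv hf.1 hg.1, eLpNorm_two_lt_top_iff.2 ?_⟩
  calc ∫⁻ t, ‖conv f g t‖ₑ ^ 2
      ≤ ∫⁻ t, ((‖f ·‖ₑ) ⋆ₗ (‖g ·‖ₑ)) t ^ 2 :=
        lintegral_mono fun t => pow_le_pow_left' (enorm_conv_le_lconvolution f g t) 2
    _ ≤ (∫⁻ t, ‖g t‖ₑ) ^ 2 * ∫⁻ t, ‖f t‖ₑ ^ 2 :=
        lintegral_lconvolution_sq_le hf.1.enorm hg.1.enorm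
    _ < ∞ := ENNReal.mul_lt_top (ENNReal.pow_lt_top hg.2) (eLpNorm_two_lt_top_iff.1 hf.2)

theorem norm_conv_le_norm_conv_norm (f g : ℝ → ℂ) (t : ℝ) :
    ‖conv f g t‖ ≤ ‖conv (fun s => (‖f s‖ : ℂ)) (fun s => (‖g s‖ : ℂ)) t‖ := by
  have hnorm : conv (fun s => (‖f s‖ : ℂ)) (fun s => (‖g s‖ : ℂ)) t
      = ((∫ s, ‖f s * g (t - s)‖ : ℝ) : ℂ) := by
    simp only [conv, norm_mul, ← ofReal_mul]
    exact integral_ofReal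
  rw [hnorm, norm_real, Real.norm_of_nonneg (integral_nonneg fun s => norm_nonneg _)]
  exact norm_integral_le_integral_norm _

theorem stmt0_general (f ψ : ℝ → ℂ) (χ : ℝ → ℝ)
    (hf : MemLp f 2) (hψ1 : Integrable ψ)
    (hχpos : ∀ t, 0 ≤ χ t) (hχ1 : Integrable χ) (δ : ℝ) :
    (∫ t, ‖conv (conv f ψ)
        (fun s => (χ s : ℂ) * Complex.exp (2 * π * δ * s * Complex.I)) t‖ ^ 2)
      ≤ ∫ t, ‖conv (fun s => (‖conv f ψ s‖ : ℂ)) (fun s => (χ s : ℂ)) t‖ ^ 2 := by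
  have hmod : ∀ s, ‖(χ s : ℂ) * Complex.exp (2 * π * δ * s * Complex.I)‖ = χ s := fun s => by
    rw [norm_mul, norm_real, Real.norm_of_nonneg (hχpos s), norm_exp]
    simp
  have hL2 : MemLp (conv (fun s => (‖conv f ψ s‖ : ℂ)) (fun s => (χ s : ℂ))) 2 :=
    (hf.conv_of_integrable hψ1).norm.ofReal.conv_of_integrable hχ1.ofReal
  refine integral_mono_of_nonneg (.of_forall fun t => by positivity)
    (hL2.integrable_norm_pow two_ne_zero) (.of_forall fun t => ?_)
  refine pow_le_pow_left₀ (norm_nonneg _) ?_ 2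
  simpa only [hmod] using norm_conv_le_norm_conv_norm (conv f ψ)
    (fun s => (χ s : ℂ) * Complex.exp (2 * π * δ * s * Complex.I)) t

/-- For `f ∈ L²`, `ψ ∈ L¹ ∩ L²`, and a nonnegative `χ ∈ L¹ ∩ L²`,
for every `δ`, `‖ |f⋆ψ| ⋆ χ ‖₂ ≥ ‖ f ⋆ ψ ⋆ (χ·e^{2πiδ·}) ‖₂`
(stated via squared L² norms). -/
theorem stmt0 (f ψ : ℝ → ℂ) (χ : ℝ → ℝ)
    (hf : MemLp f 2) (hψ1 : Integrable ψ) (hψ2 : MemLp ψ 2)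
    (hχpos : ∀ t, 0 ≤ χ t) (hχ1 : Integrable χ) (hχ2 : MemLp χ 2) (δ : ℝ) :
    (∫ t, ‖conv (conv f ψ)
        (fun s => (χ s : ℂ) * Complex.exp (2 * π * δ * s * Complex.I)) t‖ ^ 2)
      ≤ ∫ t, ‖conv (fun s => (‖conv f ψ s‖ : ℂ)) (fun s => (χ s : ℂ)) t‖ ^ 2 :=
  stmt0_general f ψ χ hf hψ1 hχpos hχ1 δ
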